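/- Fix y ∈ ℝ and define, on a neighborhood of ξ = 0 on which 1 − γ e^{πiξ/√2} ≠ 0 (such a neighborhood exists since |γ| < 1), J(ξ) = d/dξ [ ((1 − γ* e^{πiξ/√2}) / (1 − γ e^{πiξ/√2})) e^{−4πβξ} ]. Then J(0) = 0; equivalently, (γ − γ*) i /(2√2) = 2β (1 − γ)(1 − γ*). -/

import Mathlib

noncomputable section

/-- The Bäcklund parameter λ = √2 + 1. -/
def lam : ℂ := ((Real.sqrt 2 + 1 : ℝ) : ℂ)

/-- β = √(y²/2 + 1/32). -/
def beta (y : ℝ) : ℝ := Real.sqrt (y^2/2 + 1/32)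

/-- b = −y/2. -/
def bb (y : ℝ) : ℝ := -y/2

/-- A₁ = 1/2 − b/(2β). -/
def A1 (y : ℝ) : ℂ := ((1/2 - bb y/(2*beta y) : ℝ) : ℂ)

/-- A₂ = −(λ/√2)(1/2 − √2/(16βi)). -/
def A2 (y : ℝ) : ℂ :=
  -(lam/(Real.sqrt 2 : ℂ)) * (1/2 - (Real.sqrt 2 : ℂ)/(16*(beta y : ℂ)*Complex.I))

/-- A₃ = −(1/2 + b/(2β)). -/
def A3 (y : ℝ) : ℂ := ((-(1/2 + bb y/(2*beta y)) : ℝ) : ℂ)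

/-- A₄ = (λ/√2)(1/2 + √2/(16βi)). -/
def A4 (y : ℝ) : ℂ :=
  (lam/(Real.sqrt 2 : ℂ)) * (1/2 + (Real.sqrt 2 : ℂ)/(16*(beta y : ℂ)*Complex.I))

/-- γ = A₃/A₂. -/
def gam (y : ℝ) : ℂ := A3 y / A2 y

/-- γ* = A₁/A₄. -/
def gamStar (y : ℝ) : ℂ := A1 y / A4 y

/-- The function whose derivative is J. -/
def Jf (y : ℝ) (ξ : ℝ) : ℂ :=
  ((1 - gamStar y * Complex.exp ((Real.pi : ℂ) * Complex.I * (ξ : ℂ) / (Real.sqrt 2 : ℂ))) /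
   (1 - gam y * Complex.exp ((Real.pi : ℂ) * Complex.I * (ξ : ℂ) / (Real.sqrt 2 : ℂ))))
  * Complex.exp (-(4 * (Real.pi : ℂ) * (beta y : ℂ) * (ξ : ℂ)))

/-!
In closed form `γ = (8β - 4y) / (λ (4√2 β + i))` and `γ* = (8β + 4y) / (λ (4√2 β - i))`,
and `(4√2 β + i)(4√2 β - i) = 32β² + 1 = 2 (8y² + 1)`; hence `γ - γ*` and `(1 - γ)(1 - γ*)`
are simple fractions over `λ (8y² + 1)`, and the identity follows. By the quotient rule,
the derivative at `0` of `(1 - a e^{cξ}) / (1 - b e^{cξ}) · e^{-kξ}` is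
`(c (b - a) - k (1 - a)(1 - b)) / (1 - b)²`, whose numerator for `a = γ*`, `b = γ`,
`c = πi/√2`, `k = 4πβ` is `2π` times the difference of the two sides of the identity.
-/

open Complex

theorem hasDerivAt_cexp_mul_ofReal_zero (c : ℂ) :
    HasDerivAt (fun ξ : ℝ => exp (c * ξ)) c 0 := by
  simpa using ((hasDerivAt_id (0 : ℝ)).ofReal_comp.const_mul c).cexp

theorem hasDerivAt_div_mul_cexp_zero (a b c k : ℂ) (hb : b ≠ 1) :
    HasDerivAt (fun ξ : ℝ => (1 - a * exp (c * ξ)) / (1 - b * exp (c * ξ)) * exp (-(k * ξ)))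
      ((c * (b - a) - k * (1 - a) * (1 - b)) / (1 - b) ^ 2) 0 := by
  have hE := hasDerivAt_cexp_mul_ofReal_zero c
  have hF : HasDerivAt (fun ξ : ℝ => exp (-(k * ξ))) (-k) 0 := by
    simpa only [neg_mul] using hasDerivAt_cexp_mul_ofReal_zero (-k)
  have hb' : 1 - b * exp (c * ((0 : ℝ) : ℂ)) ≠ 0 := by simpa [sub_eq_zero] using hb.symm
  refine (((hE.const_mul a).const_sub 1).fun_div ((hE.const_mul b).const_sub 1) hb').fun_mul hF
    |>.congr_deriv ?_
  have : 1 - b ≠ 0 := sub_ne_zero.mpr hb.symm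
  simp only [ofReal_zero, mul_zero, neg_zero, exp_zero, mul_one]
  field_simp
  ring

theorem ofReal_sqrt_two_sq : ((√2 : ℝ) : ℂ) ^ 2 = 2 := by
  norm_cast
  exact Real.sq_sqrt zero_le_two

theorem lam_eq : lam = (√2 : ℂ) + 1 := by
  simp [lam]

theorem lam_ne_zero : lam ≠ 0 := by
  rw [lam_eq]
  norm_cast
  positivity

section
variable (y : ℝ)

theorem beta_pos : 0 < beta y := Real.sqrt_pos.mpr (by positivity)

theorem ofReal_beta_ne_zero : (beta y : ℂ) ≠ 0 := ofReal_ne_zero.mpr (beta_pos y).ne'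

theorem ofReal_beta_sq : (beta y : ℂ) ^ 2 = y ^ 2 / 2 + 1 / 32 := by
  rw [← ofReal_pow, beta, Real.sq_sqrt (by positivity)]
  push_cast
  rfl

theorem eight_mul_sq_add_one_ne_zero : (8 * y ^ 2 + 1 : ℂ) ≠ 0 := by
  norm_cast
  positivity

theorem A1_eq : A1 y = (8 * beta y + 4 * y) / (16 * beta y) := by
  have := ofReal_beta_ne_zero y
  simp only [A1, bb]
  push_cast
  field_simp
  ring

theorem A2_eq : A2 y = -(lam * (4 * √2 * beta y + I)) / (16 * beta y) := by
  have := ofReal_beta_ne_zero y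
  simp only [A2, div_mul_eq_div_div_swap, div_I]
  field_simp
  linear_combination 8 * lam * beta y * ofReal_sqrt_two_sq

theorem A3_eq : A3 y = -(8 * beta y - 4 * y) / (16 * beta y) := by
  have := ofReal_beta_ne_zero y
  simp only [A3, bb]
  push_cast
  field_simp
  ring

theorem A4_eq : A4 y = lam * (4 * √2 * beta y - I) / (16 * beta y) := by
  have := ofReal_beta_ne_zero y
  simp only [A4, div_mul_eq_div_div_swap, div_I]
  field_simp
  linear_combination -8 * lam * beta y * ofReal_sqrt_two_sq

theorem lam_mul_four_sqrt_two_beta_add_I_ne_zero : lam * (4 * √2 * beta y + I) ≠ 0 :=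
  mul_ne_zero lam_ne_zero fun h => by simpa using congrArg im h

theorem lam_mul_four_sqrt_two_beta_sub_I_ne_zero : lam * (4 * √2 * beta y - I) ≠ 0 :=
  mul_ne_zero lam_ne_zero fun h => by simpa using congrArg im h

theorem gam_eq : gam y = (8 * beta y - 4 * y) / (lam * (4 * √2 * beta y + I)) := by
  rw [gam, A3_eq, A2_eq, div_div_div_cancel_right₀ (by simp [(beta_pos y).ne']), neg_div_neg_eq]

theorem gamStar_eq : gamStar y = (8 * beta y + 4 * y) / (lam * (4 * √2 * beta y - I)) := by
  rw [gamStar, A1_eq, A4_eq, div_div_div_cancel_right₀ (by simp [(beta_pos y).ne'])]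

theorem four_sqrt_two_beta_add_I_mul_sub_I :
    (4 * √2 * beta y + I) * (4 * √2 * beta y - I) = 2 * (8 * y ^ 2 + 1) := by
  linear_combination 16 * (beta y : ℂ) ^ 2 * ofReal_sqrt_two_sq - I_sq + 32 * ofReal_beta_sq y

theorem gam_sub_gamStar :
    gam y - gamStar y = -8 * beta y * (I + 2 * √2 * y) / (lam * (8 * y ^ 2 + 1)) := by
  have hD := lam_mul_four_sqrt_two_beta_add_I_ne_zero y
  have hD' := lam_mul_four_sqrt_two_beta_sub_I_ne_zero y
  rw [gam_eq, gamStar_eq, div_sub_div _ _ hD hD',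
    div_eq_div_iff (mul_ne_zero hD hD') (mul_ne_zero lam_ne_zero (eight_mul_sq_add_one_ne_zero y))]
  linear_combination
    8 * beta y * (I + 2 * √2 * y) * lam ^ 2 * four_sqrt_two_beta_add_I_mul_sub_I y

theorem one_sub_gam_mul_one_sub_gamStar :
    (1 - gam y) * (1 - gamStar y) = (√2 - 4 * I * y) / (lam * (8 * y ^ 2 + 1)) := by
  have hD := lam_mul_four_sqrt_two_beta_add_I_ne_zero y
  have hD' := lam_mul_four_sqrt_two_beta_sub_I_ne_zero y
  have hnum : (lam * (4 * √2 * beta y + I) - (8 * beta y - 4 * y)) *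
      (lam * (4 * √2 * beta y - I) - (8 * beta y + 4 * y)) = 2 * lam * (√2 - 4 * I * y) := by
    have h₁ : (√2 + 1) * (4 * √2 * beta y + I) - (8 * beta y - 4 * y) =
        4 * √2 * beta y + 4 * y + (√2 + 1) * I := by
      linear_combination 4 * (beta y : ℂ) * ofReal_sqrt_two_sq
    have h₂ : (√2 + 1) * (4 * √2 * beta y - I) - (8 * beta y + 4 * y) =
        4 * √2 * beta y - 4 * y - (√2 + 1) * I := by
      linear_combination 4 * (beta y : ℂ) * ofReal_sqrt_two_sq
    rw [lam_eq, h₁, h₂]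
    linear_combination (16 * (beta y : ℂ) ^ 2 - 1) * ofReal_sqrt_two_sq + 32 * ofReal_beta_sq y
      - ((√2 : ℂ) + 1) ^ 2 * I_sq
  rw [gam_eq, gamStar_eq, one_sub_div hD, one_sub_div hD', div_mul_div_comm,
    div_eq_div_iff (mul_ne_zero hD hD') (mul_ne_zero lam_ne_zero (eight_mul_sq_add_one_ne_zero y))]
  linear_combination lam * (8 * y ^ 2 + 1) * hnum
    - (√2 - 4 * I * y) * lam ^ 2 * four_sqrt_two_beta_add_I_mul_sub_I y

theorem gam_sub_gamStar_mul_I_div :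
    (gam y - gamStar y) * I / (2 * √2) = 2 * beta y * (1 - gam y) * (1 - gamStar y) := by
  have := lam_ne_zero
  have := eight_mul_sq_add_one_ne_zero y
  have : (√2 : ℂ) ≠ 0 := by simp
  rw [mul_assoc, one_sub_gam_mul_one_sub_gamStar, gam_sub_gamStar]
  field_simp
  linear_combination -8 * (beta y : ℂ) * I_sq - 4 * (beta y : ℂ) * ofReal_sqrt_two_sq

theorem gam_ne_one : gam y ≠ 1 := by
  have hnum : √2 - 4 * I * y ≠ 0 := fun h => by simpa using congrArg re h
  have hprod : (1 - gam y) * (1 - gamStar y) ≠ 0 := by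
    rw [one_sub_gam_mul_one_sub_gamStar]
    exact div_ne_zero hnum (mul_ne_zero lam_ne_zero (eight_mul_sq_add_one_ne_zero y))
  exact (sub_ne_zero.mp (left_ne_zero_of_mul hprod)).symm

end

/-- J(0) = 0; equivalently (γ − γ*)i/(2√2) = 2β(1 − γ)(1 − γ*). -/
theorem J_at_zero (y : ℝ) :
    deriv (Jf y) 0 = 0 ∧
    (gam y - gamStar y) * Complex.I / (2 * (Real.sqrt 2 : ℂ))
      = 2 * (beta y : ℂ) * (1 - gam y) * (1 - gamStar y) := by
  have hJf : Jf y = fun ξ : ℝ => (1 - gamStar y * exp (Real.pi * I / √2 * ξ)) /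
      (1 - gam y * exp (Real.pi * I / √2 * ξ)) * exp (-(4 * Real.pi * beta y * ξ)) := by
    funext ξ
    rw [Jf, mul_div_right_comm]
  refine ⟨?_, gam_sub_gamStar_mul_I_div y⟩
  rw [hJf, (hasDerivAt_div_mul_cexp_zero _ _ _ _ (gam_ne_one y)).deriv, div_eq_zero_iff]
  left
  linear_combination 2 * Real.pi * gam_sub_gamStar_mul_I_div y
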